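/- Let N ≥ 2 and t be integers with 1 ≤ t ≤ N, let α = log t / log N, and let β satisfy 0 < β < α. Then there exists a constant C > 0 (depending only on N, t, β) such that for every positive integer j there exists a set A ⊆ {0, 1, …, N^j − 1} with |A| = t^j whose discrete Fourier coefficients satisfy |χ̂_A(k)| ≤ C·(t/N)^j·k^{−β/2} for every integer k with 1 ≤ k ≤ N^j − 1. In particular, |A| = (N^j)^α, so A has fractional density α relative to N^j. -/

import Mathlib

/-
Keep each point of `[0, M)`, `M = N ^ j`, independently with probability `n / M`, `n = t ^ j`:
exactly, keep `a` when `ω a ∈ E` for a uniformly random map `ω : [0, M) → [0, M)` and a fixed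
`E` with `|E| = n`. Let `Y` be the centred indicator of `E`. The `2m`-th moment over `ω` of
`∑ₐ Y (ω a) z a`, `|z a| ≤ 1`, expands over index tuples, and every tuple containing some point
exactly once vanishes because `Y` has mean zero. The surviving tuples involve at most `m`
distinct points, which gives the Bernstein-type bound `E |∑|^(2m) ≲ m ^ (2m) n ^ m`. Summing over
all `M` frequencies, one `ω` makes every Fourier sum at most `(M m ^ (2m) n ^ m) ^ (1/2m)`, and
since `n = M ^ α` this is `≲ n M ^ (-β/2)` as soon as `m (α - β) ≥ 1`. At frequency `0` the same
sum is `|A| - n`, so adding or removing that many points makes `|A| = n` and only doubles the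
bound.
-/

open Complex Real Finset

/-- Discrete Fourier coefficient of the characteristic function of a finite set
`A ⊆ {0, …, M-1}`. -/
noncomputable def finsetFourier (M : ℕ) (A : Finset ℕ) (k : ℤ) : ℂ :=
  (M : ℂ)⁻¹ * ∑ a ∈ A, Complex.exp (-(2 * Real.pi * Complex.I * k * a) / M)

open ComplexConjugate

theorem natCast_div_mul_cancel_of_le {𝕜 : Type*} [Field 𝕜] [CharZero 𝕜] {n c : ℕ} (h : n ≤ c) :
    (n : 𝕜) / c * c = n :=
  div_mul_cancel_of_imp fun hc => by simp [Nat.le_zero.1 (Nat.cast_eq_zero.1 hc ▸ h)]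

theorem sum_range_pow_le_one_add_pow {x : ℝ} (hx : 0 ≤ x) (m : ℕ) :
    ∑ r ∈ range (m + 1), x ^ r ≤ (1 + x) ^ m := by
  rw [add_comm 1 x, add_pow]
  refine sum_le_sum fun r hr => ?_
  have : (1 : ℝ) ≤ m.choose r := by
    exact_mod_cast Nat.choose_pos (Nat.lt_succ_iff.1 (mem_range.1 hr))
  rw [one_pow, mul_one]
  exact le_mul_of_one_le_right (by positivity) this

section FiberCounts

variable {ι κ : Type*}

theorem sum_pow_card_of_card_le [Fintype ι] {p : ℝ} (hp : 0 ≤ p) (m : ℕ) :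
    ∑ S : Finset ι with #S ≤ m, p ^ #S ≤ (1 + Fintype.card ι * p) ^ m := by
  calc ∑ S : Finset ι with #S ≤ m, p ^ #S
        = ∑ r ∈ range (Fintype.card ι + 1),
            (Fintype.card ι).choose r • if r ≤ m then p ^ r else 0 := by
        rw [sum_filter, ← powerset_univ,
          sum_powerset_apply_card (fun r => if r ≤ m then p ^ r else 0), card_univ]
    _ ≤ ∑ r ∈ range (Fintype.card ι + 1), if r ≤ m then (Fintype.card ι * p) ^ r else 0 := by
        refine sum_le_sum fun r _ => ?_
        split_ifs
        · rw [nsmul_eq_mul, mul_pow]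
          gcongr
          exact_mod_cast Nat.choose_le_pow _ _
        · simp
    _ ≤ ∑ r ∈ range (m + 1), (Fintype.card ι * p) ^ r := by
        rw [← sum_filter]
        exact sum_le_sum_of_subset_of_nonneg
          (fun r hr => mem_range.2 (Nat.lt_succ_of_le (mem_filter.1 hr).2))
          fun _ _ _ => by positivity
    _ ≤ (1 + Fintype.card ι * p) ^ m := sum_range_pow_le_one_add_pow (by positivity) m

variable [DecidableEq ι]

theorem mem_image_univ_iff_card_pos [Fintype κ] {f : κ → ι} {a : ι} :
    a ∈ univ.image f ↔ 0 < #{i | f i = a} := by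
  simp [card_pos, filter_nonempty_iff]

variable [Fintype ι] [Fintype κ]

theorem prod_comp_eq_prod_pow_card {M : Type*} [CommMonoid M] (h : ι → M) (f : κ → ι) :
    ∏ i, h (f i) = ∏ a, h a ^ #{i | f i = a} := by
  rw [← prod_fiberwise univ f]
  refine prod_congr rfl fun a _ => ?_
  rw [prod_congr rfl fun i hi => congrArg h (mem_filter.1 hi).2, prod_const]

theorem sum_prod_sum_mul_eq {Ω R : Type*} [Fintype Ω] [DecidableEq κ] [CommSemiring R]
    (Y : Ω → R) (w : κ → ι → R) :
    ∑ ω : ι → Ω, ∏ i, ∑ a, Y (ω a) * w i a =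
      ∑ f : κ → ι, (∏ i, w i (f i)) * ∏ a, ∑ x, Y x ^ #{i | f i = a} := by
  simp_rw [Fintype.prod_sum, prod_mul_distrib]
  rw [sum_comm]
  refine sum_congr rfl fun f _ => ?_
  rw [← sum_mul, mul_comm]
  congr 1
  exact sum_congr rfl fun ω _ => prod_comp_eq_prod_pow_card (fun a => Y (ω a)) f

theorem two_mul_card_image_le {f : κ → ι} (hf : ∀ a, #{i | f i = a} ≠ 1) :
    2 * #(univ.image f) ≤ Fintype.card κ := by
  have hfiber : Fintype.card κ = ∑ a, #{i | f i = a} :=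
    card_eq_sum_card_fiberwise fun i _ => mem_univ (f i)
  calc 2 * #(univ.image f) = ∑ _a ∈ univ.image f, 2 := by rw [sum_const, smul_eq_mul, mul_comm]
    _ ≤ ∑ a ∈ univ.image f, #{i | f i = a} := sum_le_sum fun a ha => by
        obtain ⟨i, -, rfl⟩ := mem_image.1 ha
        have : 0 < #{j | f j = f i} := card_pos.2 ⟨i, by simp⟩
        have := hf (f i)
        omega
    _ ≤ Fintype.card κ := (sum_le_sum_of_subset (subset_univ _)).trans hfiber.ge

theorem card_filter_image_eq_le [DecidableEq κ] (S : Finset ι) :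
    #{f : κ → ι | univ.image f = S} ≤ #S ^ Fintype.card κ := by
  calc #{f : κ → ι | univ.image f = S} ≤ #(Fintype.piFinset fun _ : κ => S) :=
        card_le_card fun f hf => Fintype.mem_piFinset.2 fun i =>
          (mem_filter.1 hf).2 ▸ mem_image_of_mem f (mem_univ i)
    _ = #S ^ Fintype.card κ := by rw [Fintype.card_piFinset, prod_const, card_univ]

theorem sum_pow_card_image_le [DecidableEq κ] {p : ℝ} (hp : 0 ≤ p) {m : ℕ}
    (hκ : Fintype.card κ ≤ 2 * m) :
    ∑ f : κ → ι with 2 * #(univ.image f) ≤ Fintype.card κ, p ^ #(univ.image f)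
      ≤ m ^ Fintype.card κ * (1 + Fintype.card ι * p) ^ m := by
  calc ∑ f : κ → ι with 2 * #(univ.image f) ≤ Fintype.card κ, p ^ #(univ.image f)
        = ∑ S : Finset ι, ∑ f : κ → ι with 2 * #(univ.image f) ≤ Fintype.card κ ∧
            univ.image f = S, p ^ #S := by
        rw [← sum_fiberwise _ (fun f : κ → ι => univ.image f)]
        refine sum_congr rfl fun S _ => ?_
        rw [filter_filter]
        exact sum_congr rfl fun f hf => by rw [(mem_filter.1 hf).2.2]
    _ ≤ ∑ S : Finset ι with #S ≤ m, (m : ℝ) ^ Fintype.card κ * p ^ #S := by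
        rw [sum_filter]
        refine sum_le_sum fun S _ => ?_
        split_ifs with hS
        · rw [sum_const, nsmul_eq_mul]
          gcongr
          calc (#{f : κ → ι | 2 * #(univ.image f) ≤ Fintype.card κ ∧ univ.image f = S} : ℝ)
              ≤ #{f : κ → ι | univ.image f = S} := by
                exact_mod_cast card_le_card fun f hf => by simp_all
            _ ≤ #S ^ Fintype.card κ := by exact_mod_cast card_filter_image_eq_le S
            _ ≤ m ^ Fintype.card κ := by gcongr
        · refine (sum_eq_zero fun f hf => ?_).le
          obtain ⟨h2, rfl⟩ := (mem_filter.1 hf).2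
          omega
    _ = m ^ Fintype.card κ * ∑ S : Finset ι with #S ≤ m, p ^ #S := by rw [mul_sum]
    _ ≤ m ^ Fintype.card κ * (1 + Fintype.card ι * p) ^ m := by
        gcongr
        exact sum_pow_card_of_card_le hp m

end FiberCounts

section Moments

variable {Ω : Type*} [Fintype Ω] {Y : Ω → ℝ} {p : ℝ}

theorem abs_sum_pow_le (hY : ∀ x, |Y x| ≤ 1) (hY2 : ∑ x, Y x ^ 2 ≤ p * Fintype.card Ω) {c : ℕ}
    (hc : 2 ≤ c) : |∑ x, Y x ^ c| ≤ p * Fintype.card Ω :=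
  calc |∑ x, Y x ^ c| ≤ ∑ x, |Y x| ^ c := by
        simpa only [abs_pow] using abs_sum_le_sum_abs (fun x => Y x ^ c) univ
    _ ≤ ∑ x, |Y x| ^ 2 := sum_le_sum fun x _ => pow_le_pow_of_le_one (abs_nonneg _) (hY x) hc
    _ ≤ p * Fintype.card Ω := by simpa only [sq_abs] using hY2

variable {ι κ : Type*} [Fintype ι] [Fintype κ] [DecidableEq ι]

theorem prod_abs_sum_pow_card_le (hY0 : ∑ x, Y x = 0) (hY : ∀ x, |Y x| ≤ 1)
    (hY2 : ∑ x, Y x ^ 2 ≤ p * Fintype.card Ω) (hp : 0 ≤ p) (f : κ → ι) :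
    ∏ a, |∑ x, Y x ^ #{i | f i = a}| ≤ Fintype.card Ω ^ Fintype.card ι *
      if 2 * #(univ.image f) ≤ Fintype.card κ then p ^ #(univ.image f) else 0 := by
  by_cases h : ∃ a, #{i | f i = a} = 1
  · obtain ⟨a, ha⟩ := h
    rw [prod_eq_zero (mem_univ a) (by simp [ha, hY0])]
    positivity
  push Not at h
  rw [if_pos (two_mul_card_image_le h)]
  calc ∏ a, |∑ x, Y x ^ #{i | f i = a}|
      ≤ ∏ a, (Fintype.card Ω * if a ∈ univ.image f then p else 1 : ℝ) := by
        refine prod_le_prod (fun _ _ => abs_nonneg _) fun a _ => ?_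
        split_ifs with ha
        · have := mem_image_univ_iff_card_pos.1 ha
          rw [mul_comm]
          exact abs_sum_pow_le hY hY2 (by have := h a; omega)
        · rw [Nat.eq_zero_of_not_pos (mt mem_image_univ_iff_card_pos.2 ha)]
          simp
    _ = Fintype.card Ω ^ Fintype.card ι * p ^ #(univ.image f) := by
        rw [prod_mul_distrib, prod_ite_mem, univ_inter, prod_const, prod_const, card_univ]

theorem sum_norm_sum_mul_pow_le [DecidableEq Ω] (hY0 : ∑ x, Y x = 0) (hY : ∀ x, |Y x| ≤ 1)
    (hY2 : ∑ x, Y x ^ 2 ≤ p * Fintype.card Ω) (hp : 0 ≤ p) (z : ι → ℂ) (hz : ∀ a, ‖z a‖ ≤ 1)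
    (m : ℕ) :
    ∑ ω : ι → Ω, ‖∑ a, (Y (ω a) : ℂ) * z a‖ ^ (2 * m)
      ≤ Fintype.card Ω ^ Fintype.card ι * (m ^ (2 * m) * (1 + Fintype.card ι * p) ^ m) := by
  set w : Fin m ⊕ Fin m → ι → ℂ := Sum.elim (fun _ => z) fun _ a => conj (z a)
  have hw : ∀ i a, ‖w i a‖ ≤ 1 := by rintro (i | i) a <;> simp [w, hz]
  have hpow : ∀ ω : ι → Ω, ((‖∑ a, (Y (ω a) : ℂ) * z a‖ ^ (2 * m) : ℝ) : ℂ)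
      = ∏ i, ∑ a, (Y (ω a) : ℂ) * w i a := by
    intro ω
    have hconj : ∑ a, (Y (ω a) : ℂ) * conj (z a) = conj (∑ a, (Y (ω a) : ℂ) * z a) := by
      simp
    simp only [Fintype.prod_sum_type, w, Sum.elim_inl, Sum.elim_inr, prod_const, card_univ,
      Fintype.card_fin, hconj, ← mul_pow, Complex.mul_conj, Complex.normSq_eq_norm_sq]
    push_cast
    ring
  calc ∑ ω : ι → Ω, ‖∑ a, (Y (ω a) : ℂ) * z a‖ ^ (2 * m)
      = ‖∑ ω : ι → Ω, ((‖∑ a, (Y (ω a) : ℂ) * z a‖ ^ (2 * m) : ℝ) : ℂ)‖ := by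
        rw [← Complex.ofReal_sum, Complex.norm_real, Real.norm_of_nonneg (by positivity)]
    _ = ‖∑ f : Fin m ⊕ Fin m → ι,
          (∏ i, w i (f i)) * ∏ a, ∑ x, (Y x : ℂ) ^ #{i | f i = a}‖ := by
        simp_rw [hpow]
        exact congrArg _ (sum_prod_sum_mul_eq (fun x => (Y x : ℂ)) w)
    _ ≤ ∑ f : Fin m ⊕ Fin m → ι, ∏ a, |∑ x, Y x ^ #{i | f i = a}| := by
        refine norm_sum_le_of_le _ fun f _ => ?_
        rw [norm_mul, norm_prod, norm_prod]
        refine mul_le_of_le_one_left (by positivity)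
          (prod_le_one (fun _ _ => norm_nonneg _) fun i _ => hw i (f i)) |>.trans_eq ?_
        simp_rw [← Complex.ofReal_pow, ← Complex.ofReal_sum, Complex.norm_real, Real.norm_eq_abs]
    _ ≤ ∑ f : Fin m ⊕ Fin m → ι, Fintype.card Ω ^ Fintype.card ι *
          if 2 * #(univ.image f) ≤ Fintype.card (Fin m ⊕ Fin m) then p ^ #(univ.image f) else 0 :=
        sum_le_sum fun f _ => prod_abs_sum_pow_card_le hY0 hY hY2 hp f
    _ ≤ Fintype.card Ω ^ Fintype.card ι * (m ^ (2 * m) * (1 + Fintype.card ι * p) ^ m) := by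
        rw [← mul_sum, ← sum_filter]
        have hcard : Fintype.card (Fin m ⊕ Fin m) = 2 * m := by simp [two_mul]
        simp only [hcard]
        gcongr
        simpa only [hcard] using sum_pow_card_image_le (ι := ι) hp hcard.le

end Moments

theorem norm_sum_sub_sum_le_of_subset {α E : Type*} [DecidableEq α] [SeminormedAddCommGroup E]
    {s t : Finset α} (hst : s ⊆ t) {g : α → E} (hg : ∀ x, ‖g x‖ ≤ 1) :
    ‖∑ x ∈ t, g x - ∑ x ∈ s, g x‖ ≤ #t - #s := by
  rw [← sum_sdiff_eq_sub hst, ← Nat.cast_sub (card_le_card hst),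
    ← card_sdiff_of_subset hst]
  simpa using norm_sum_le_of_le (t \ s) fun x _ => hg x

theorem exists_card_eq_norm_sum_sub_sum_le {α E : Type*} [DecidableEq α]
    [SeminormedAddCommGroup E]
    {s u : Finset α} (hsu : s ⊆ u) {n : ℕ} (hn : n ≤ #u) :
    ∃ t ⊆ u, #t = n ∧ ∀ g : α → E, (∀ x, ‖g x‖ ≤ 1) →
      ‖∑ x ∈ t, g x - ∑ x ∈ s, g x‖ ≤ |(#s : ℝ) - n| := by
  rcases le_total #s n with h | h
  · obtain ⟨t, hst, htu, rfl⟩ := exists_subsuperset_card_eq hsu h hn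
    refine ⟨t, htu, rfl, fun g hg => (norm_sum_sub_sum_le_of_subset hst hg).trans_eq ?_⟩
    rw [abs_sub_comm, abs_of_nonneg (sub_nonneg.2 (by exact_mod_cast h))]
  · obtain ⟨t, hts, rfl⟩ := exists_subset_card_eq h
    refine ⟨t, hts.trans hsu, rfl, fun g hg => ?_⟩
    rw [norm_sub_rev, abs_of_nonneg (sub_nonneg.2 (by exact_mod_cast h))]
    exact norm_sum_sub_sum_le_of_subset hts hg

section RandomSubset

variable {ι : Type*} [Fintype ι] [DecidableEq ι]

noncomputable def centeredIndicator (E : Finset ι) (x : ι) : ℝ :=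
  (if x ∈ E then 1 else 0) - #E / Fintype.card ι

theorem sum_centeredIndicator (E : Finset ι) : ∑ x, centeredIndicator E x = 0 := by
  simp [centeredIndicator, sum_sub_distrib, mul_comm _ ((#E : ℝ) / _),
    natCast_div_mul_cancel_of_le (card_le_univ E)]

theorem abs_centeredIndicator_le_one (E : Finset ι) (x : ι) : |centeredIndicator E x| ≤ 1 := by
  have h0 : (0 : ℝ) ≤ #E / Fintype.card ι := by positivity
  have h1 : (#E : ℝ) / Fintype.card ι ≤ 1 :=
    div_le_one_of_le₀ (by exact_mod_cast card_le_univ E) (by positivity)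
  unfold centeredIndicator
  split_ifs <;> rw [abs_le] <;> constructor <;> linarith

theorem sum_centeredIndicator_sq_le (E : Finset ι) : ∑ x, centeredIndicator E x ^ 2 ≤ #E := by
  set q : ℝ := #E / Fintype.card ι
  have hq : 0 ≤ q := by positivity
  have hsq : ∀ x, centeredIndicator E x ^ 2 = (if x ∈ E then 1 - 2 * q else 0) + q ^ 2 := by
    intro x
    unfold centeredIndicator
    split_ifs <;> ring
  have hcard : q * Fintype.card ι = #E := natCast_div_mul_cancel_of_le (card_le_univ E)
  simp only [hsq, sum_add_distrib, ← sum_filter, sum_const, filter_mem_eq_inter, univ_inter,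
    card_univ, nsmul_eq_mul]
  nlinarith [mul_nonneg hq (Nat.cast_nonneg (α := ℝ) #E)]

theorem sum_centeredIndicator_comp_mul (E : Finset ι) (ω : ι → ι) (z : ι → ℂ) :
    ∑ a, (centeredIndicator E (ω a) : ℂ) * z a
      = ∑ a with ω a ∈ E, z a - (#E / Fintype.card ι : ℂ) * ∑ a, z a := by
  simp only [centeredIndicator, Complex.ofReal_sub, sub_mul, sum_sub_distrib, ← mul_sum,
    sum_filter]
  push_cast
  refine congrArg₂ _ (sum_congr rfl fun a _ => ?_) rfl
  split_ifs <;> simp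

theorem exists_forall_norm_sum_sub_mul_sum_pow_le {K : Type*} [Fintype K] {n : ℕ}
    (hn : n ≤ Fintype.card ι) (z : K → ι → ℂ) (hz : ∀ k a, ‖z k a‖ ≤ 1) (m : ℕ) :
    ∃ A : Finset ι, ∀ k,
      ‖∑ a ∈ A, z k a - (n / Fintype.card ι : ℂ) * ∑ a, z k a‖ ^ (2 * m)
        ≤ Fintype.card K * (m ^ (2 * m) * (1 + n) ^ m) := by
  obtain ⟨E, -, hE⟩ := exists_subset_card_eq (s := (univ : Finset ι)) (by simpa using hn)
  set B : ℝ := m ^ (2 * m) * (1 + n) ^ m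
  set S : (ι → ι) → K → ℂ := fun ω k => ∑ a, (centeredIndicator E (ω a) : ℂ) * z k a
  have hmoment : ∀ k,
      ∑ ω : ι → ι, ‖S ω k‖ ^ (2 * m) ≤ Fintype.card ι ^ Fintype.card ι * B := by
    intro k
    have := sum_norm_sum_mul_pow_le (sum_centeredIndicator E) (abs_centeredIndicator_le_one E)
      ((sum_centeredIndicator_sq_le E).trans_eq
        (natCast_div_mul_cancel_of_le (card_le_univ E)).symm) (by positivity) (z k) (hz k) m
    rwa [mul_comm (Fintype.card ι : ℝ), natCast_div_mul_cancel_of_le (card_le_univ E), hE]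
      at this
  have htotal : ∑ ω : ι → ι, ∑ k, ‖S ω k‖ ^ (2 * m) ≤ ∑ _ω : ι → ι, Fintype.card K * B := by
    calc ∑ ω : ι → ι, ∑ k, ‖S ω k‖ ^ (2 * m) = ∑ k, ∑ ω : ι → ι, ‖S ω k‖ ^ (2 * m) :=
          sum_comm
      _ ≤ ∑ _k : K, (Fintype.card ι ^ Fintype.card ι * B : ℝ) :=
          sum_le_sum fun k _ => hmoment k
      _ = ∑ _ω : ι → ι, Fintype.card K * B := by
        simp only [sum_const, card_univ, Fintype.card_fun, nsmul_eq_mul]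
        push_cast
        ring
  obtain ⟨ω, -, hω⟩ := exists_le_of_sum_le ⟨id, mem_univ _⟩ htotal
  refine ⟨({a | ω a ∈ E} : Finset ι), fun k => ?_⟩
  rw [← hE, ← sum_centeredIndicator_comp_mul]
  exact (single_le_sum (f := fun k => ‖S ω k‖ ^ (2 * m)) (fun _ _ => by positivity)
    (mem_univ k)).trans hω

theorem exists_card_eq_forall_norm_sum_sub_mul_sum_le {K : Type*} [Fintype K] {n m : ℕ}
    (hm : m ≠ 0) (hn : n ≤ Fintype.card ι) (z : K → ι → ℂ) (hz : ∀ k a, ‖z k a‖ ≤ 1) {R : ℝ}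
    (hR0 : 0 ≤ R) (hR : (Fintype.card K + 1) * (m ^ (2 * m) * (1 + n) ^ m) ≤ R ^ (2 * m)) :
    ∃ A : Finset ι, #A = n ∧
      ∀ k, ‖∑ a ∈ A, z k a - (n / Fintype.card ι : ℂ) * ∑ a, z k a‖ ≤ 2 * R := by
  set z' : Option K → ι → ℂ := fun o a => o.elim 1 fun k => z k a
  obtain ⟨A₀, hA₀⟩ := exists_forall_norm_sum_sub_mul_sum_pow_le hn z'
    (by rintro (_ | k) a <;> simp [z', hz]) m
  have hsmall : ∀ o, ‖∑ a ∈ A₀, z' o a - (n / Fintype.card ι : ℂ) * ∑ a, z' o a‖ ≤ R :=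
    fun o => (pow_le_pow_iff_left₀ (norm_nonneg _) hR0 (by omega)).1
      ((hA₀ o).trans (by simpa [Fintype.card_option] using hR))
  -- the constant frequency measures how far `A₀` is from having `n` elements
  have hcard : |(#A₀ : ℝ) - n| ≤ R := by
    have := hsmall none
    simp only [z', Option.elim_none, sum_const, card_univ, nsmul_eq_mul, mul_one,
      natCast_div_mul_cancel_of_le hn] at this
    exact_mod_cast this
  obtain ⟨A, -, hA, hround⟩ := exists_card_eq_norm_sum_sub_sum_le (E := ℂ) (subset_univ A₀)
    (by simpa using hn)
  refine ⟨A, hA, fun k => ?_⟩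
  calc ‖∑ a ∈ A, z k a - (n / Fintype.card ι : ℂ) * ∑ a, z k a‖
      = ‖(∑ a ∈ A, z k a - ∑ a ∈ A₀, z k a)
          + (∑ a ∈ A₀, z k a - (n / Fintype.card ι : ℂ) * ∑ a, z k a)‖ := by
        rw [sub_add_sub_cancel]
    _ ≤ R + R := (norm_add_le _ _).trans
        (add_le_add ((hround _ (hz k)).trans hcard) (hsmall (some k)))
    _ = 2 * R := by ring

end RandomSubset

theorem sum_range_exp_eq_zero {M : ℕ} {k : ℤ} (hk : ¬ (M : ℤ) ∣ k) :
    ∑ x ∈ range M, Complex.exp (-(2 * Real.pi * Complex.I * k * x) / M) = 0 := by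
  rcases eq_or_ne M 0 with rfl | hM
  · simp
  set ζ := Complex.exp (2 * Real.pi * Complex.I / M)
  have hζ : IsPrimitiveRoot ζ M := isPrimitiveRoot_exp M hM
  have hw : ζ ^ (-k) ≠ 1 := by
    rw [Ne, hζ.zpow_eq_one_iff_dvd]
    simpa using hk
  have hwM : (ζ ^ (-k)) ^ M = 1 := by
    rw [← zpow_natCast, ← zpow_mul, mul_comm (-k), zpow_mul, zpow_natCast, hζ.pow_eq_one,
      one_zpow]
  have hterm : ∀ x : ℕ, Complex.exp (-(2 * Real.pi * Complex.I * k * x) / M) = (ζ ^ (-k)) ^ x := by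
    intro x
    rw [← Complex.exp_int_mul, ← Complex.exp_nat_mul]
    congr 1
    push_cast
    ring
  simp_rw [hterm, geom_sum_eq hw, hwM, sub_self, zero_div]

theorem exists_card_eq_forall_norm_finsetFourier_le {M n m : ℕ} (hm : m ≠ 0) (hn : n ≤ M)
    {R : ℝ} (hR0 : 0 ≤ R) (hR : (M + 1) * (m ^ (2 * m) * (1 + n) ^ m) ≤ R ^ (2 * m)) :
    ∃ A ⊆ range M, #A = n ∧ ∀ k : ℕ, 0 < k → k < M → ‖finsetFourier M A k‖ ≤ 2 * R / M := by
  set z : Fin M → Fin M → ℂ := fun k a =>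
    Complex.exp (-(2 * Real.pi * Complex.I * ((k : ℕ) : ℤ) * (a : ℕ)) / M)
  have hz : ∀ k a, ‖z k a‖ ≤ 1 := fun k a => by simp [z, Complex.norm_exp]
  obtain ⟨A, hA, hsum⟩ :=
    exists_card_eq_forall_norm_sum_sub_mul_sum_le hm (by simpa using hn) z hz hR0
      (by simpa using hR)
  refine ⟨A.map Fin.valEmbedding, by simp [subset_iff], by simpa using hA, fun k hk hkM => ?_⟩
  have hvanish : ∑ a, z ⟨k, hkM⟩ a = 0 := by
    rw [Fin.sum_univ_eq_sum_range (fun x => Complex.exp (-(2 * Real.pi * Complex.I *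
      ((k : ℕ) : ℤ) * x) / M))]
    exact sum_range_exp_eq_zero (by exact_mod_cast Nat.not_dvd_of_pos_of_lt hk hkM)
  have := hsum ⟨k, hkM⟩
  rw [hvanish, mul_zero, sub_zero] at this
  rw [finsetFourier, sum_map, norm_mul, norm_inv, Complex.norm_natCast, div_eq_inv_mul]
  gcongr
  exact this

theorem add_one_mul_pow_le_rpow {x α β : ℝ} {m : ℕ} (hx : 1 ≤ x) (hα : 0 ≤ α)
    (hm : 1 ≤ m * (α - β)) :
    (x + 1) * (m ^ (2 * m) * (1 + x ^ α) ^ m) ≤ (2 * m * x ^ (α - β / 2)) ^ (2 * m) := by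
  have hm1 : 1 ≤ m := Nat.pos_of_ne_zero fun h => by simp [h] at hm; linarith
  have hxα : 1 ≤ x ^ α := Real.one_le_rpow hx hα
  calc (x + 1) * (m ^ (2 * m) * (1 + x ^ α) ^ m)
      ≤ 2 * x * (m ^ (2 * m) * (2 * x ^ α) ^ m) := by gcongr <;> linarith
    _ = 2 ^ (m + 1) * m ^ (2 * m) * x ^ (1 + α * m) := by
        rw [Real.rpow_add (by linarith), Real.rpow_one, Real.rpow_mul_natCast (by linarith)]
        ring
    _ ≤ 4 ^ m * m ^ (2 * m) * x ^ ((α - β / 2) * (2 * m : ℕ)) := by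
        gcongr
        · calc (2 : ℝ) ^ (m + 1) ≤ 2 ^ (2 * m) := pow_le_pow_right₀ (by norm_num) (by omega)
            _ = 4 ^ m := by rw [pow_mul]; norm_num
        · push_cast; nlinarith
    _ = (2 * m * x ^ (α - β / 2)) ^ (2 * m) := by
        rw [Real.rpow_mul_natCast (by linarith), mul_pow, mul_pow, pow_mul 2]
        norm_num

/-- Section 5: existence of Salem-type sets in the integers.  For each `j` there is a
set `A ⊆ {0,…,N^j − 1}` of cardinality `t^j` (hence of fractional density
`α = log t / log N` relative to `N^j`) whose Fourier coefficients decay like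
`(t/N)^j k^{−β/2}`. -/
theorem salem_type_set_exists (N t : ℕ) (α β : ℝ)
    (hN : 2 ≤ N) (ht₁ : 1 ≤ t) (ht₂ : t ≤ N)
    (hα : α = Real.log t / Real.log N)
    (hβ₀ : 0 < β) (hβα : β < α) :
    ∃ C : ℝ, 0 < C ∧ ∀ j : ℕ, 1 ≤ j →
      ∃ A : Finset ℕ, A ⊆ Finset.range (N ^ j) ∧ A.card = t ^ j ∧
        ∀ k : ℕ, 1 ≤ k → k ≤ N ^ j - 1 →
          ‖finsetFourier (N ^ j) A k‖ ≤
            C * ((t : ℝ) / N) ^ j * (k : ℝ) ^ (-β / 2) := by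
  have hNα : (N : ℝ) ^ α = t := by
    rw [hα, log_div_log, rpow_logb (by positivity) (by norm_cast; omega) (by exact_mod_cast ht₁)]
  obtain ⟨m, hm⟩ : ∃ m : ℕ, 1 ≤ m * (α - β) := by
    obtain ⟨m, hm⟩ := exists_nat_ge (α - β)⁻¹
    exact ⟨m, by rwa [← div_le_iff₀ (by linarith), one_div]⟩
  have hm0 : 0 < m := Nat.pos_of_ne_zero fun h => by simp [h] at hm; linarith
  refine ⟨4 * m, by positivity, fun j _ => ?_⟩
  have hMα : ((N : ℝ) ^ j) ^ α = t ^ j := by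
    rw [← rpow_natCast_mul (by positivity), mul_comm, rpow_mul_natCast (by positivity), hNα]
  obtain ⟨A, hAsub, hAcard, hA⟩ := exists_card_eq_forall_norm_finsetFourier_le hm0.ne'
    (Nat.pow_le_pow_left ht₂ j) (R := 2 * m * ((N ^ j : ℕ) : ℝ) ^ (α - β / 2)) (by positivity)
    (by simpa [hMα] using add_one_mul_pow_le_rpow (x := (N ^ j : ℕ)) (by
      exact_mod_cast Nat.one_le_pow _ _ (by omega)) (hβ₀.trans hβα).le hm)
  refine ⟨A, hAsub, hAcard, fun k hk hkM => (hA k hk (by omega)).trans ?_⟩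
  have hkM' : (k : ℝ) ≤ (N : ℝ) ^ j := by exact_mod_cast hkM.trans (Nat.sub_le _ 1)
  push_cast
  calc 2 * (2 * m * ((N : ℝ) ^ j) ^ (α - β / 2)) / (N : ℝ) ^ j
      = 4 * m * ((t : ℝ) / N) ^ j * ((N : ℝ) ^ j) ^ (-β / 2) := by
        rw [sub_eq_add_neg, rpow_add (by positivity), hMα, div_pow, neg_div]
        field_simp
        ring
    _ ≤ 4 * m * ((t : ℝ) / N) ^ j * (k : ℝ) ^ (-β / 2) :=
        mul_le_mul_of_nonneg_left (rpow_le_rpow_of_nonpos (by exact_mod_cast hk) hkM' (by linarith))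
          (by positivity)
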